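/- arXiv:2410.21476 — 6 statements merged into one kernel-verified Lean document; each statement's English description precedes it below -/
import Mathlib

section
/- Let (Q,*) be a finite quandle that admits a right circular order. Then Q is trivial, i.e., q*r = q for all q,r ∈ Q. Equivalently, every non-trivial finite quandle is not right circular orderable. -/
/-- A finite quandle which admits a right circular order is
trivial, i.e. `op q r = q` for all `q r`. Equivalently, every non-trivial
finite quandle is not right circular orderable. -/
theorem finite_rightCircularOrderable_quandle_is_trivial
    {Q : Type*} [Finite Q] (op : Q → Q → Q)
    (hQ1 : ∀ q : Q, op q q = q)
    (hQ2 : ∀ q r : Q, ∃! s : Q, op s r = q)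
    (hQ3 : ∀ q r s : Q, op (op q r) s = op (op q s) (op r s))
    (c : Q → Q → Q → ℤ)
    (hrange : ∀ q1 q2 q3 : Q, c q1 q2 q3 = -1 ∨ c q1 q2 q3 = 0 ∨ c q1 q2 q3 = 1)
    (hi : ∀ q1 q2 q3 : Q, c q1 q2 q3 = 0 ↔ (q1 = q2 ∨ q2 = q3 ∨ q1 = q3))
    (hii : ∀ q1 q2 q3 q4 : Q,
      c q2 q3 q4 - c q1 q3 q4 + c q1 q2 q4 - c q1 q2 q3 = 0)
    (hiii : ∀ q q1 q2 q3 : Q, c q1 q2 q3 = c (op q1 q) (op q2 q) (op q3 q)) :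
    ∀ q r : Q, op q r = q := by
  intro q r
  by_contra h
  set σ : Q → Q := fun x => op x r with hσ
  -- σ is injective
  have hinj : Function.Injective σ := by
    intro a b hab
    obtain ⟨s, -, huniq⟩ := hQ2 (op a r) r
    have ha := huniq a rfl
    have hb := huniq b hab.symm
    rw [ha, hb]
  -- σ fixes r
  have hσr : σ r = r := hQ1 r
  have hqr : q ≠ r := by
    intro hqr; exact h (hqr ▸ hQ1 r)
  -- iterates of q avoid r
  have hiter_ne : ∀ k : ℕ, σ^[k] q ≠ r := by
    intro k
    induction k with
    | zero => exact hqr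
    | succ k ih =>
      rw [Function.iterate_succ_apply']
      intro hc
      exact ih (hinj (by rw [hσr]; exact hc))
  -- invariance of c r · · under σ
  have hinv : ∀ x y : Q, c r x y = c r (σ x) (σ y) := by
    intro x y
    have := hiii r r x y
    rwa [show op r r = r from hQ1 r] at this
  set e : ℤ := c r q (σ q) with he
  have hene : e ≠ 0 := by
    rw [he]
    intro h0
    rcases (hi r q (σ q)).mp h0 with h1 | h1 | h1
    · exact hqr h1.symm
    · exact h h1.symm
    · exact hiter_ne 1 (by simpa using h1.symm)
  have herange : e = -1 ∨ e = 1 := by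
    rcases hrange r q (σ q) with h1 | h1 | h1 <;> [left; exact absurd h1 hene; right] <;>
      rw [he, h1]
  -- transitivity of the relation c r · · = e
  have trans : ∀ x y z : Q, c r x y = e → c r y z = e → c r x z = e := by
    intro x y z h1 h2
    have hc := hii r x y z
    rcases hrange x y z with h3 | h3 | h3 <;> rcases hrange r x z with h4 | h4 | h4 <;>
      rcases herange with h5 | h5 <;> omega
  -- c r (σ^[k] q) (σ^[k+1] q) = e for all k
  have hstep : ∀ k : ℕ, c r (σ^[k] q) (σ^[k+1] q) = e := by
    intro k
    induction k with
    | zero => simp [he]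
    | succ k ih =>
      rw [hinv] at ih
      rwa [← Function.iterate_succ_apply' σ k, ← Function.iterate_succ_apply' σ (k+1)] at ih
  -- c r q (σ^[k+1] q) = e for all k
  have hchain : ∀ k : ℕ, c r q (σ^[k+1] q) = e := by
    intro k
    induction k with
    | zero => simp [he]
    | succ k ih => exact trans q (σ^[k+1] q) (σ^[k+2] q) ih (hstep (k+1))
  -- finiteness: some positive iterate returns q to itself
  obtain ⟨i, j, hij, hfix⟩ : ∃ i j : ℕ, i ≠ j ∧ σ^[i] q = σ^[j] q :=
    Finite.exists_ne_map_eq_of_infinite (fun k : ℕ => σ^[k] q)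
  wlog hlt : i < j generalizing i j
  · exact this j i hij.symm hfix.symm (by omega)
  have hinj' : Function.Injective (σ^[i]) := Function.Injective.iterate hinj i
  have hret : σ^[j - i] q = q := by
    apply hinj'
    rw [← Function.iterate_add_apply]
    rw [show i + (j - i) = j by omega]
    exact hfix.symm
  have hn : j - i - 1 + 1 = j - i := by omega
  have := hchain (j - i - 1)
  rw [hn, hret] at this
  have h0 : c r q q = 0 := (hi r q q).mpr (Or.inr (Or.inl rfl))
  exact hene (by omega)
end

section
/- Let (Q,*) be a kei (an involutory quandle, i.e., (q*r)*r = q for all q,r ∈ Q) that admits a right circular order. Then Q is trivial, i.e., q*r = q for all q,r ∈ Q. Equivalently, every non-trivial kei is not right circular orderable. -/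
/-- A kei (involutory quandle: `(q * r) * r = q`) which admits a
right circular order is trivial, i.e. `op q r = q` for all `q r`. Equivalently,
every non-trivial kei is not right circular orderable. -/
theorem kei_rightCircularOrderable_is_trivial
    {Q : Type*} (op : Q → Q → Q)
    (hQ1 : ∀ q : Q, op q q = q)
    (hQ2 : ∀ q r : Q, ∃! s : Q, op s r = q)
    (hQ3 : ∀ q r s : Q, op (op q r) s = op (op q s) (op r s))
    (hkei : ∀ q r : Q, op (op q r) r = q)
    (c : Q → Q → Q → ℤ)
    (hrange : ∀ q1 q2 q3 : Q, c q1 q2 q3 = -1 ∨ c q1 q2 q3 = 0 ∨ c q1 q2 q3 = 1)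
    (hi : ∀ q1 q2 q3 : Q, c q1 q2 q3 = 0 ↔ (q1 = q2 ∨ q2 = q3 ∨ q1 = q3))
    (hii : ∀ q1 q2 q3 q4 : Q,
      c q2 q3 q4 - c q1 q3 q4 + c q1 q2 q4 - c q1 q2 q3 = 0)
    (hiii : ∀ q q1 q2 q3 : Q, c q1 q2 q3 = c (op q1 q) (op q2 q) (op q3 q)) :
    ∀ q r : Q, op q r = q := by
  -- antisymmetry in the first two arguments
  have hanti : ∀ a b d : Q, c b a d = -(c a b d) := by
    intro a b d
    have h := hii a b a d
    have h1 : c a a d = 0 := (hi a a d).mpr (Or.inl rfl)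
    have h2 : c a b a = 0 := (hi a b a).mpr (Or.inr (Or.inr rfl))
    linarith
  intro q r
  by_contra h
  set b := op q r with hb
  have hkb : op b r = q := hkei q r
  have key : c q b r = c b q r := by
    have := hiii r q b r
    rwa [hQ1 r, hkb] at this
  have hzero : c q b r = 0 := by
    have := hanti q b r
    linarith [key, this]
  rcases (hi q b r).mp hzero with h1 | h2 | h3
  · exact h h1.symm
  · -- b = r, then q = op b r = op r r = r, so b = op q q = q
    have hq : q = r := by rw [← hkb, h2, hQ1]
    exact h (h2.trans hq.symm)
  · -- q = r
    rw [h3] at hb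
    exact h ((hb.trans (hQ1 r)).trans h3.symm)
end

section
/- Let X be a nonempty set, F(X) the free group on X, and let Q ⊆ F(X) be the set of all conjugates w⁻¹xw of generators x ∈ X by elements w ∈ F(X), equipped with the conjugation operation q*r = r⁻¹qr (so Q is a subquandle of Conj(F(X)), and it realizes the free quandle on X). Then Q admits a right order, and Q is semi-latin at every point: for every q̂ ∈ Q, the map Q → Q, r ↦ r⁻¹q̂r, is injective. -/
/-!
The Magnus map `μ : x ↦ 1 + x` embeds `F(X)` into the units of the ring `ℤ⟨⟨X⟩⟩` of
noncommutative power series: the coefficient of `x₁ ⋯ xₖ` in `μ (x₁ ^ e₁ ⋯ xₖ ^ eₖ)` (with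
`xᵢ ≠ xᵢ₊₁`, `eᵢ ≠ 0`) is `e₁ ⋯ eₖ ≠ 0`. Call `g` positive if the least nonzero coefficient of
`μ g - 1`, for a well-order of the words refining their length, is positive. As `μ g - 1` has no
constant term, multiplying it on either side by a series with constant term `1` does not change
this leading coefficient. Hence the positive elements are closed under products and conjugation,
and `a < b :↔ a⁻¹ b` positive is a linear order on `F(X)` invariant under conjugation; its
restriction to `Q` is a right order.

If `r⁻¹ q̂ r = s⁻¹ q̂ s`, then `r s⁻¹` commutes with `q̂`. By Nielsen–Schreier the two generate a
free abelian, hence cyclic, subgroup; as `q̂` has exponent sum `1` and `r s⁻¹` has exponent sum `0`,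
this forces `r s⁻¹ = 1`.
-/

open Finset

/-- Noncommutative formal power series: `coeff [x₁, …, xₙ]` is the coefficient of `x₁ ⋯ xₙ`. -/
structure NCPowerSeries (R X : Type*) where
  coeff : List X → R

namespace NCPowerSeries

variable {R X : Type*}

instance : FunLike (NCPowerSeries R X) (List X) R where
  coe := coeff
  coe_injective | ⟨_⟩, ⟨_⟩, rfl => rfl

@[simp] theorem coe_mk (F : List X → R) : ⇑(mk F) = F := rfl

@[ext] theorem ext {f g : NCPowerSeries R X} (h : ∀ w, f w = g w) : f = g := DFunLike.ext _ _ h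

def equivFun : NCPowerSeries R X ≃ (List X → R) := ⟨coeff, mk, fun _ => rfl, fun _ => rfl⟩

variable [Ring R]

instance : AddCommGroup (NCPowerSeries R X) := equivFun.addCommGroup

instance : Mul (NCPowerSeries R X) :=
  ⟨fun f g => mk fun w => ∑ i ∈ range (w.length + 1), f (w.take i) * g (w.drop i)⟩

instance : One (NCPowerSeries R X) := ⟨mk fun | [] => 1 | _ :: _ => 0⟩

@[simp] theorem add_apply (f g : NCPowerSeries R X) (w : List X) : (f + g) w = f w + g w := rfl

@[simp] theorem sub_apply (f g : NCPowerSeries R X) (w : List X) : (f - g) w = f w - g w := rfl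

@[simp] theorem neg_apply (f : NCPowerSeries R X) (w : List X) : (-f) w = -f w := rfl

@[simp] theorem zero_apply (w : List X) : (0 : NCPowerSeries R X) w = 0 := rfl

theorem sum_apply {ι : Type*} (s : Finset ι) (F : ι → NCPowerSeries R X) (w : List X) :
    (∑ i ∈ s, F i) w = ∑ i ∈ s, F i w := by
  induction s using Finset.cons_induction <;> simp [*]

theorem mul_apply (f g : NCPowerSeries R X) (w : List X) :
    (f * g) w = ∑ i ∈ range (w.length + 1), f (w.take i) * g (w.drop i) := rfl

@[simp] theorem one_apply_nil : (1 : NCPowerSeries R X) [] = 1 := rfl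

theorem one_apply_of_ne_nil {w : List X} (hw : w ≠ []) : (1 : NCPowerSeries R X) w = 0 := by
  cases w
  · exact absurd rfl hw
  · rfl

protected theorem one_mul (f : NCPowerSeries R X) : 1 * f = f := by
  ext w
  rw [mul_apply, sum_eq_single 0 (fun i hi hi0 => ?_) (by simp)]
  · rw [List.take_zero, one_apply_nil, one_mul, List.drop_zero]
  · rw [one_apply_of_ne_nil, zero_mul]
    rw [Ne, List.take_eq_nil_iff, ← List.length_eq_zero_iff]
    simp at hi
    omega

protected theorem mul_one (f : NCPowerSeries R X) : f * 1 = f := by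
  ext w
  rw [mul_apply, sum_eq_single w.length (fun i hi hne => ?_) (by simp)]
  · rw [List.drop_length, one_apply_nil, mul_one, List.take_length]
  · rw [one_apply_of_ne_nil (by simp at hi ⊢; omega), mul_zero]

protected theorem mul_assoc (f g h : NCPowerSeries R X) : f * g * h = f * (g * h) := by
  ext w
  simp only [mul_apply, sum_mul, mul_sum, sum_sigma']
  apply sum_nbij' (fun p => ⟨p.2, p.1 - p.2⟩) (fun p => ⟨p.1 + p.2, p.1⟩)
  all_goals
    rintro ⟨i, j⟩ hij
    simp only [mem_sigma, mem_range, List.length_take, List.length_drop] at hij ⊢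
  · omega
  · omega
  · congr 1; omega
  · congr 1; omega
  · rw [List.take_take, min_eq_left (by omega), List.drop_take, List.drop_drop, mul_assoc]
    congr 4; omega

instance : Ring (NCPowerSeries R X) where
  __ := (inferInstance : AddCommGroup (NCPowerSeries R X))
  mul_assoc := NCPowerSeries.mul_assoc
  one_mul := NCPowerSeries.one_mul
  mul_one := NCPowerSeries.mul_one
  left_distrib f g h := by ext w; simp only [mul_apply, add_apply, mul_add, sum_add_distrib]
  right_distrib f g h := by ext w; simp only [mul_apply, add_apply, add_mul, sum_add_distrib]
  zero_mul f := by ext w; simp only [mul_apply, zero_apply, zero_mul, sum_const_zero]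
  mul_zero f := by ext w; simp only [mul_apply, zero_apply, mul_zero, sum_const_zero]

theorem mul_apply_nil (f g : NCPowerSeries R X) : (f * g) [] = f [] * g [] := by
  simp [mul_apply]

theorem mul_apply_singleton (f g : NCPowerSeries R X) (x : X) :
    (f * g) [x] = f [] * g [x] + f [x] * g [] := by
  simp [mul_apply, sum_range_succ]

def VanishesBelow (f : NCPowerSeries R X) (n : ℕ) : Prop :=
  ∀ w : List X, w.length < n → f w = 0

theorem vanishesBelow_zero (f : NCPowerSeries R X) : VanishesBelow f 0 :=
  fun _ h => absurd h (Nat.not_lt_zero _)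

theorem vanishesBelow_sub_one {f : NCPowerSeries R X} (hf : f [] = 1) :
    VanishesBelow (f - 1) 1 := by
  intro w hw
  obtain rfl : w = [] := List.length_eq_zero_iff.mp (by omega)
  rw [sub_apply, hf, one_apply_nil, sub_self]

namespace VanishesBelow

variable {f g : NCPowerSeries R X} {m n : ℕ}

theorem mono (hf : VanishesBelow f n) (hmn : m ≤ n) : VanishesBelow f m :=
  fun w hw => hf w (by omega)

theorem neg (hf : VanishesBelow f n) : VanishesBelow (-f) n :=
  fun w hw => by rw [neg_apply, hf w hw, neg_zero]

theorem add (hf : VanishesBelow f n) (hg : VanishesBelow g n) : VanishesBelow (f + g) n :=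
  fun w hw => by rw [add_apply, hf w hw, hg w hw, add_zero]

theorem sub (hf : VanishesBelow f n) (hg : VanishesBelow g n) : VanishesBelow (f - g) n :=
  fun w hw => by rw [sub_apply, hf w hw, hg w hw, sub_zero]

theorem mul (hf : VanishesBelow f m) (hg : VanishesBelow g n) :
    VanishesBelow (f * g) (m + n) := by
  intro w hw
  rw [mul_apply]
  refine sum_eq_zero fun i _ => ?_
  by_cases hi : (w.take i).length < m
  · rw [hf _ hi, zero_mul]
  · rw [hg _ (by simp only [List.length_take, List.length_drop] at hi ⊢; omega), mul_zero]

theorem pow (hf : VanishesBelow f m) (n : ℕ) : VanishesBelow (f ^ n) (n * m) := by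
  induction n with
  | zero => simpa using vanishesBelow_zero _
  | succ n ih => simpa [pow_succ, add_mul] using ih.mul hf

end VanishesBelow

/-- `∑ₙ (1 - f) ^ n` is a two-sided inverse of `f`: at a word `w` only the terms `n ≤ |w|`
contribute, and there it agrees with a finite geometric sum. -/
theorem isUnit_of_apply_nil (f : NCPowerSeries R X) (hf : f [] = 1) : IsUnit f := by
  set d := 1 - f
  have hd : VanishesBelow d 1 := by
    simpa only [d, neg_sub] using (vanishesBelow_sub_one hf).neg
  let g : NCPowerSeries R X := mk fun w => ∑ n ∈ range (w.length + 1), (d ^ n) w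
  have hg (N : ℕ) : VanishesBelow (g - ∑ n ∈ range (N + 1), d ^ n) (N + 1) := by
    intro v hv
    rw [sub_apply, sum_apply, sub_eq_zero, coe_mk]
    refine sum_subset (range_subset_range.mpr (by omega)) fun n _ hn => ?_
    exact hd.pow n v (by simp at hn; omega)
  have hfd : f = 1 - d := by simp [d]
  refine ⟨⟨f, g, ext fun w => ?_, ext fun w => ?_⟩, rfl⟩
  · have key := (((vanishesBelow_zero f).mul (hg w.length)).sub
      (hd.pow (w.length + 1))) w (by omega)
    rwa [mul_sub, hfd, mul_neg_geom_sum, ← hfd, sub_sub, sub_add_cancel, sub_apply,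
      sub_eq_zero] at key
  · have key := (((hg w.length).mul (vanishesBelow_zero f)).sub
      ((hd.pow (w.length + 1)).mono (by omega))) w (by omega)
    rwa [sub_mul, hfd, geom_sum_mul_neg, ← hfd, sub_sub, sub_add_cancel, sub_apply,
      sub_eq_zero] at key

theorem units_inv_apply_nil (u : (NCPowerSeries R X)ˣ) (hu : (u : NCPowerSeries R X) [] = 1) :
    (↑u⁻¹ : NCPowerSeries R X) [] = 1 := by
  have h := congrArg (· []) u.inv_mul
  rwa [mul_apply_nil, hu, mul_one] at h

open scoped Classical in
noncomputable def letter (x : X) : NCPowerSeries R X := mk fun w => if w = [x] then 1 else 0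

@[simp] theorem letter_apply_nil (x : X) : (letter x : NCPowerSeries R X) [] = 0 := by
  simp [letter]

@[simp] theorem letter_apply_singleton (x : X) : (letter x : NCPowerSeries R X) [x] = 1 := by
  simp [letter]

open scoped Classical in
noncomputable def restrict (S : Set X) : NCPowerSeries R X →+* NCPowerSeries R X where
  toFun f := mk fun w => if ∀ y ∈ w, y ∈ S then f w else 0
  map_one' := by
    ext (_ | _) <;> simp [one_apply_of_ne_nil]
  map_mul' f g := by
    ext w
    simp only [coe_mk, mul_apply]
    by_cases hw : ∀ y ∈ w, y ∈ S
    · rw [if_pos hw]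
      refine sum_congr rfl fun i _ => ?_
      rw [if_pos fun y hy => hw y (List.mem_of_mem_take hy),
        if_pos fun y hy => hw y (List.mem_of_mem_drop hy)]
    · refine (if_neg hw).trans (sum_eq_zero fun i _ => ?_).symm
      by_cases ht : ∀ y ∈ w.take i, y ∈ S
      · have hd : ¬ ∀ y ∈ w.drop i, y ∈ S := fun hd => hw fun y hy => by
          rw [← List.take_append_drop i w, List.mem_append] at hy
          exact hy.elim (ht y) (hd y)
        rw [if_neg hd, mul_zero]
      · rw [if_neg ht, zero_mul]
  map_zero' := by ext; simp
  map_add' f g := by ext; simp only [coe_mk, add_apply]; split_ifs <;> simp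

theorem restrict_apply_of_forall {S : Set X} {w : List X} (hw : ∀ y ∈ w, y ∈ S)
    (f : NCPowerSeries R X) : restrict S f w = f w :=
  if_pos hw

theorem restrict_apply_of_not_forall {S : Set X} {w : List X} (hw : ¬ ∀ y ∈ w, y ∈ S)
    (f : NCPowerSeries R X) : restrict S f w = 0 :=
  if_neg hw

theorem restrict_letter {S : Set X} {x : X} (hx : x ∈ S) :
    restrict S (letter x : NCPowerSeries R X) = letter x := by
  ext w
  by_cases hw : ∀ y ∈ w, y ∈ S
  · exact restrict_apply_of_forall hw _
  · rw [restrict_apply_of_not_forall hw, letter, coe_mk, if_neg]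
    rintro rfl
    simp [hx] at hw

theorem apply_take_eq_zero {x : X} {f : NCPowerSeries R X} (hf : restrict {x} f = f)
    {v : List X} (hv : v.IsChain (· ≠ ·)) {i : ℕ} (hi : 2 ≤ i) (hiv : i ≤ v.length) :
    f (v.take i) = 0 := by
  obtain ⟨a, b, t, rfl⟩ : ∃ a b t, v = a :: b :: t := by
    rcases v with _ | ⟨a, _ | ⟨b, t⟩⟩ <;> simp at hiv ⊢ <;> omega
  obtain ⟨j, rfl⟩ : ∃ j, i = j + 2 := ⟨i - 2, by omega⟩
  rw [← hf, restrict_apply_of_not_forall]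
  intro h
  exact (List.isChain_cons_cons.mp hv).1 <| (h a (by simp)).trans (h b (by simp)).symm

theorem prod_apply_eq_zero_of_length_lt (P : List (X × NCPowerSeries R X))
    (hP : ∀ p ∈ P, restrict {p.1} p.2 = p.2) {v : List X} (hv : v.IsChain (· ≠ ·))
    (hlen : P.length < v.length) : (P.map Prod.snd).prod v = 0 := by
  induction P generalizing v with
  | nil => exact one_apply_of_ne_nil (by rintro rfl; simp at hlen)
  | cons p P ih =>
    rw [List.map_cons, List.prod_cons, mul_apply]
    refine sum_eq_zero fun i hi => ?_
    rcases lt_or_ge i 2 with hi2 | hi2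
    · rw [ih (fun q hq => hP q (List.mem_cons_of_mem p hq)) (hv.drop i)
        (by simp only [List.length_cons, List.length_drop] at hlen ⊢; omega), mul_zero]
    · rw [apply_take_eq_zero (hP p List.mem_cons_self) hv hi2 (by simp at hi; omega), zero_mul]

theorem prod_apply_map_fst (P : List (X × NCPowerSeries R X))
    (hP : ∀ p ∈ P, restrict {p.1} p.2 = p.2) (hchain : (P.map Prod.fst).IsChain (· ≠ ·)) :
    (P.map Prod.snd).prod (P.map Prod.fst) = (P.map fun p => p.2 [p.1]).prod := by
  induction P with
  | nil => rfl
  | cons p P ih =>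
    have hP' : ∀ q ∈ P, restrict {q.1} q.2 = q.2 := fun q hq => hP q (List.mem_cons_of_mem p hq)
    simp only [List.map_cons, List.prod_cons] at hchain ⊢
    rw [mul_apply, sum_eq_single 1, List.take_one, List.drop_one, List.head?_cons,
      Option.toList_some, List.tail_cons, ih hP' hchain.tail]
    · intro i hi hi1
      rcases Nat.lt_or_ge i 2 with hi2 | hi2
      · obtain rfl : i = 0 := by omega
        rw [List.drop_zero, prod_apply_eq_zero_of_length_lt P hP' hchain (by simp), mul_zero]
      · rw [apply_take_eq_zero (hP p List.mem_cons_self) hchain hi2 (by simp at hi ⊢; omega),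
          zero_mul]
    · simp

/-- Any well-order on words refining the comparison of lengths would do. -/
def WordLT : List X → List X → Prop :=
  (Prod.Lex (· < ·) WellOrderingRel).onFun fun w => (w.length, w)

instance : IsWellOrder (List X) WordLT :=
  Function.Injective.isWellOrder (f := fun w : List X => (w.length, w)) _
    fun _ _ h => congrArg Prod.snd h

theorem WordLT.length_le {v w : List X} (h : WordLT v w) : v.length ≤ w.length :=
  (Prod.lex_def.mp h).elim le_of_lt fun h => h.1.le

theorem wordLT_of_length_lt {v w : List X} (h : v.length < w.length) : WordLT v w :=
  Prod.Lex.left _ _ h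

def PosLeadingAt (f : NCPowerSeries ℤ X) (w : List X) : Prop :=
  0 < f w ∧ ∀ v, WordLT v w → f v = 0

namespace PosLeadingAt

variable {f g : NCPowerSeries ℤ X} {v w : List X}

theorem vanishesBelow (hf : PosLeadingAt f w) : VanishesBelow f w.length :=
  fun _ hv => hf.2 _ (wordLT_of_length_lt hv)

theorem le_length (hf : PosLeadingAt f w) {n : ℕ} (hn : VanishesBelow f n) : n ≤ w.length :=
  not_lt.mp fun h => hf.1.ne' (hn w h)

theorem of_vanishesBelow_sub (hf : PosLeadingAt f w)
    (hg : VanishesBelow (g - f) (w.length + 1)) : PosLeadingAt g w := by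
  have hgf : ∀ v : List X, v.length ≤ w.length → g v = f v := fun v hv =>
    sub_eq_zero.mp (hg v (by omega))
  exact ⟨hgf w le_rfl ▸ hf.1, fun v hv => (hgf v hv.length_le).trans (hf.2 v hv)⟩

theorem exists_add (hf : PosLeadingAt f v) (hg : PosLeadingAt g w) :
    ∃ u, PosLeadingAt (f + g) u ∧ (u = v ∨ u = w) := by
  rcases trichotomous_of WordLT v w with hvw | rfl | hwv
  · refine ⟨v, ⟨?_, fun u hu => ?_⟩, .inl rfl⟩
    · simpa [hg.2 v hvw] using hf.1
    · rw [add_apply, hf.2 u hu, hg.2 u (trans_of WordLT hu hvw), add_zero]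
  · refine ⟨v, ⟨add_pos hf.1 hg.1, fun u hu => ?_⟩, .inl rfl⟩
    rw [add_apply, hf.2 u hu, hg.2 u hu, add_zero]
  · refine ⟨w, ⟨?_, fun u hu => ?_⟩, .inr rfl⟩
    · simpa [hf.2 w hwv] using hg.1
    · rw [add_apply, hg.2 u hu, hf.2 u (trans_of WordLT hu hwv), add_zero]

end PosLeadingAt

theorem exists_posLeadingAt {f : NCPowerSeries ℤ X} (hf : f ≠ 0) :
    ∃ w, PosLeadingAt f w ∨ PosLeadingAt (-f) w := by
  have hsupp : ∃ w, f w ≠ 0 := by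
    by_contra! h
    exact hf (ext fun w => by simpa using h w)
  obtain ⟨w, hw, hmin⟩ := (IsWellFounded.wf (r := WordLT)).has_min {w | f w ≠ 0} hsupp
  have hbelow : ∀ v, WordLT v w → f v = 0 := fun v hv => by_contra fun h => hmin v h hv
  rcases lt_or_gt_of_ne hw with hneg | hpos
  · exact ⟨w, .inr ⟨by simpa using hneg, fun v hv => by rw [neg_apply, hbelow v hv, neg_zero]⟩⟩
  · exact ⟨w, .inl ⟨hpos, hbelow⟩⟩

end NCPowerSeries

theorem FreeGroup.subsingleton_of_forall_mul_comm {Y : Type*}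
    (h : ∀ a b : FreeGroup Y, a * b = b * a) : Subsingleton Y := by
  refine ⟨fun y₁ y₂ => by_contra fun hne => ?_⟩
  classical
  have := congrArg (lift fun y => if y = y₁ then Equiv.swap (0 : Fin 3) 1 else Equiv.swap 1 2)
    (h (of y₁) (of y₂))
  rw [_root_.map_mul, _root_.map_mul, lift_apply_of, lift_apply_of, if_pos rfl, if_neg (Ne.symm hne)] at this
  exact absurd this (by decide)

theorem IsFreeGroup.isCyclic_of_isMulCommutative {G : Type*} [Group G] [IsFreeGroup G]
    [IsMulCommutative G] : IsCyclic G := by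
  let e := IsFreeGroup.toFreeGroup G
  have : Subsingleton (IsFreeGroup.Generators G) :=
    FreeGroup.subsingleton_of_forall_mul_comm fun a b => by
      simpa using congrArg e (isMulCommutative_iff.mp ‹_› (e.symm a) (e.symm b))
  have : IsCyclic (FreeGroup (IsFreeGroup.Generators G)) := by
    cases isEmpty_or_nonempty (IsFreeGroup.Generators G)
    · infer_instance
    · have := uniqueOfSubsingleton (Classical.arbitrary (IsFreeGroup.Generators G))
      infer_instance
  exact isCyclic_of_surjective e.symm.toMonoidHom e.symm.surjective

/-- By Nielsen–Schreier, `a` and `b` generate a free group, which is abelian and hence cyclic. -/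
theorem IsFreeGroup.exists_zpow_eq_of_commute {G : Type*} [Group G] [IsFreeGroup G] {a b : G}
    (h : Commute a b) : ∃ (u : G) (m n : ℤ), u ^ m = a ∧ u ^ n = b := by
  let H := Subgroup.closure ({a, b} : Set G)
  have : IsMulCommutative H := Subgroup.isMulCommutative_closure (by
    simp only [Set.mem_insert_iff, Set.mem_singleton_iff]
    rintro _ (rfl | rfl) _ (rfl | rfl) <;> first | rfl | exact h | exact h.symm)
  obtain ⟨u, hu⟩ := (isCyclic_of_isMulCommutative (G := H)).exists_generator
  obtain ⟨m, hm⟩ := Subgroup.mem_zpowers_iff.mp (hu ⟨a, Subgroup.subset_closure (by simp)⟩)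
  obtain ⟨n, hn⟩ := Subgroup.mem_zpowers_iff.mp (hu ⟨b, Subgroup.subset_closure (by simp)⟩)
  exact ⟨u, m, n, congrArg Subtype.val hm, congrArg Subtype.val hn⟩

namespace FreeGroup

open NCPowerSeries

variable {X : Type*}

def IsSyllableDecomposition (g : FreeGroup X) (S : List (X × ℤ)) : Prop :=
  (S.map Prod.fst).IsChain (· ≠ ·) ∧ (∀ p ∈ S, p.2 ≠ 0) ∧ (S.map fun p => of p.1 ^ p.2).prod = g

theorem IsSyllableDecomposition.zpow_mul {g : FreeGroup X} {S : List (X × ℤ)}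
    (hS : IsSyllableDecomposition g S) (x : X) {k : ℤ} (hk : k ≠ 0) :
    ∃ S', IsSyllableDecomposition (of x ^ k * g) S' := by
  obtain ⟨hchain, hne, rfl⟩ := hS
  match S, hchain, hne with
  | [], _, _ => exact ⟨[(x, k)], List.isChain_singleton _, by simpa using hk, by simp⟩
  | (y, e) :: S, hchain, hne =>
    simp only [List.map_cons, List.prod_cons, List.mem_cons, forall_eq_or_imp] at hchain hne ⊢
    by_cases hyx : y = x
    · subst hyx
      by_cases hke : k + e = 0
      · refine ⟨S, hchain.tail, hne.2, ?_⟩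
        rw [← mul_assoc, ← zpow_add, hke, zpow_zero, one_mul]
      · refine ⟨(y, k + e) :: S, by simpa using hchain, by simpa [hke] using hne.2, ?_⟩
        simp [zpow_add, mul_assoc]
    · refine ⟨(x, k) :: (y, e) :: S, ?_, by simpa [hk] using hne, by simp⟩
      simpa [List.isChain_cons_cons, Ne.symm hyx] using hchain

theorem exists_isSyllableDecomposition (g : FreeGroup X) : ∃ S, IsSyllableDecomposition g S := by
  have hg : g ∈ Subgroup.closure (Set.range (of : X → FreeGroup X)) := by
    simp [closure_range_of]
  induction hg using Subgroup.closure_induction_left with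
  | one => exact ⟨[], List.IsChain.nil, by simp, rfl⟩
  | mul_left _ hx _ _ ih =>
    obtain ⟨x, rfl⟩ := hx
    obtain ⟨S, hS⟩ := ih
    simpa using hS.zpow_mul x one_ne_zero
  | inv_mul_cancel _ hx _ _ ih =>
    obtain ⟨x, rfl⟩ := hx
    obtain ⟨S, hS⟩ := ih
    simpa using hS.zpow_mul x (by norm_num : (-1 : ℤ) ≠ 0)

noncomputable def magnus : FreeGroup X →* (NCPowerSeries ℤ X)ˣ :=
  lift fun x => (isUnit_of_apply_nil (1 + letter x) (by simp)).unit

theorem coe_magnus_of (x : X) : (magnus (of x) : NCPowerSeries ℤ X) = 1 + letter x := by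
  simp [magnus]

theorem magnus_apply_nil (g : FreeGroup X) : (magnus g : NCPowerSeries ℤ X) [] = 1 := by
  induction g using FreeGroup.induction_on with
  | C1 => rfl
  | of x => simp [coe_magnus_of]
  | inv_of x hx => rw [_root_.map_inv]; exact units_inv_apply_nil _ hx
  | mul g h hg hh => rw [_root_.map_mul, Units.val_mul, mul_apply_nil, hg, hh, one_mul]

theorem magnus_zpow_apply_singleton (x : X) (n : ℤ) :
    (magnus (of x ^ n) : NCPowerSeries ℤ X) [x] = n := by
  let φ : FreeGroup X →* Multiplicative ℤ :=
    MonoidHom.mk' (fun g => .ofAdd ((magnus g : NCPowerSeries ℤ X) [x])) fun g h => by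
      rw [_root_.map_mul, Units.val_mul, mul_apply_singleton, magnus_apply_nil, magnus_apply_nil,
        one_mul, mul_one, add_comm]
      rfl
  have h := congrArg Multiplicative.toAdd (map_zpow φ (of x) n)
  simpa [φ, coe_magnus_of, one_apply_of_ne_nil] using h

theorem restrict_magnus_zpow (x : X) (n : ℤ) :
    restrict {x} (magnus (of x ^ n) : NCPowerSeries ℤ X) = magnus (of x ^ n) := by
  let ρ := Units.map (restrict {x} : NCPowerSeries ℤ X →+* _).toMonoidHom
  have h : ρ (magnus (of x)) = magnus (of x) :=
    Units.ext (by simp [ρ, coe_magnus_of, restrict_letter])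
  have hn : ρ (magnus (of x ^ n)) = magnus (of x ^ n) := by
    rw [map_zpow, map_zpow, h]
  exact congrArg Units.val hn

/-- The coefficient of `x₁ ⋯ xₖ` in `magnus (x₁ ^ e₁ ⋯ xₖ ^ eₖ)` is `e₁ ⋯ eₖ`. -/
theorem magnus_ne_one {g : FreeGroup X} (hg : g ≠ 1) : magnus g ≠ 1 := by
  obtain ⟨S, hchain, hne, rfl⟩ := exists_isSyllableDecomposition g
  have hS : S ≠ [] := by rintro rfl; exact hg rfl
  let P := S.map fun p => (p.1, (magnus (of p.1 ^ p.2) : NCPowerSeries ℤ X))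
  have hP : ∀ p ∈ P, restrict {p.1} p.2 = p.2 := by
    simp only [P, List.mem_map]
    rintro _ ⟨p, -, rfl⟩
    exact restrict_magnus_zpow p.1 p.2
  have hfst : P.map Prod.fst = S.map Prod.fst := by simp [P]
  have hprod : (P.map Prod.snd).prod =
      (magnus (S.map fun p => of p.1 ^ p.2).prod : NCPowerSeries ℤ X) := by
    rw [← Units.coeHom_apply, ← MonoidHom.comp_apply, map_list_prod]
    simp [P, Function.comp_def]
  have key := prod_apply_map_fst P hP (hfst ▸ hchain)
  rw [hprod, hfst] at key
  intro h1
  rw [h1, Units.val_one, one_apply_of_ne_nil (by simpa using hS)] at key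
  refine List.prod_ne_zero (fun h0 => ?_) key.symm
  simp only [P, List.map_map, List.mem_map, Function.comp_apply,
    magnus_zpow_apply_singleton] at h0
  obtain ⟨p, hp, h0⟩ := h0
  exact hne p hp h0

def MagnusPos (g : FreeGroup X) : Prop :=
  ∃ w, PosLeadingAt ((magnus g : NCPowerSeries ℤ X) - 1) w

theorem vanishesBelow_magnus_sub_one (g : FreeGroup X) :
    VanishesBelow ((magnus g : NCPowerSeries ℤ X) - 1) 1 :=
  vanishesBelow_sub_one (magnus_apply_nil g)

theorem not_magnusPos_one : ¬ MagnusPos (1 : FreeGroup X) := by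
  rintro ⟨w, hw, -⟩
  simp at hw

theorem MagnusPos.mul {g h : FreeGroup X} (hg : MagnusPos g) (hh : MagnusPos h) :
    MagnusPos (g * h) := by
  obtain ⟨v, hv⟩ := hg
  obtain ⟨w, hw⟩ := hh
  obtain ⟨u, hu, huvw⟩ := hv.exists_add hw
  refine ⟨u, hu.of_vanishesBelow_sub ?_⟩
  have e : (magnus (g * h) : NCPowerSeries ℤ X) - 1 - ((magnus g - 1) + (magnus h - 1)) =
      (magnus g - 1) * (magnus h - 1) := by
    rw [_root_.map_mul, Units.val_mul]; noncomm_ring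
  rw [e]
  refine (hv.vanishesBelow.mul hw.vanishesBelow).mono ?_
  have := hv.le_length (vanishesBelow_magnus_sub_one g)
  have := hw.le_length (vanishesBelow_magnus_sub_one h)
  rcases huvw with rfl | rfl <;> omega

theorem MagnusPos.conj {g : FreeGroup X} (hg : MagnusPos g) (r : FreeGroup X) :
    MagnusPos (r⁻¹ * g * r) := by
  obtain ⟨w, hw⟩ := hg
  refine ⟨w, hw.of_vanishesBelow_sub ?_⟩
  set a : NCPowerSeries ℤ X := ↑(magnus g)
  set u : NCPowerSeries ℤ X := ↑(magnus r)
  set ui : NCPowerSeries ℤ X := ↑(magnus r⁻¹)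
  have hu : ui * u = 1 := by simp [ui, u, ← Units.val_mul]
  have e : (magnus (r⁻¹ * g * r) : NCPowerSeries ℤ X) - 1 - (a - 1) =
      (ui - 1) * (a - 1) * u + (a - 1) * (u - 1) := by
    have e' : ui * a * u - 1 - (a - 1) =
        (ui - 1) * (a - 1) * u + (a - 1) * (u - 1) + (ui * u - 1) := by noncomm_ring
    rw [hu, sub_self, add_zero] at e'
    rw [_root_.map_mul, _root_.map_mul, Units.val_mul, Units.val_mul]
    exact e'
  rw [e]
  have ha := hw.vanishesBelow
  exact ((((vanishesBelow_magnus_sub_one _).mul ha).mul (vanishesBelow_zero u)).mono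
    (by omega)).add (ha.mul (vanishesBelow_magnus_sub_one r))

theorem magnusPos_or_magnusPos_inv {g : FreeGroup X} (hg : g ≠ 1) :
    MagnusPos g ∨ MagnusPos g⁻¹ := by
  have hD : (magnus g : NCPowerSeries ℤ X) - 1 ≠ 0 := by
    rw [sub_ne_zero, ← Units.val_one, Ne, Units.val_inj]
    exact magnus_ne_one hg
  obtain ⟨w, hw | hw⟩ := exists_posLeadingAt hD
  · exact .inl ⟨w, hw⟩
  refine .inr ⟨w, hw.of_vanishesBelow_sub ?_⟩
  set a : NCPowerSeries ℤ X := ↑(magnus g)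
  set ai : NCPowerSeries ℤ X := ↑(magnus g⁻¹)
  have ha : ai * a = 1 := by simp [ai, a, ← Units.val_mul]
  have e : ai - 1 - -(a - 1) = -((ai - 1) * (a - 1)) := by
    have e' : ai - 1 - -(a - 1) = -((ai - 1) * (a - 1)) + (ai * a - 1) := by noncomm_ring
    rwa [ha, sub_self, add_zero] at e'
  have hD' : VanishesBelow (a - 1) w.length := by simpa using hw.vanishesBelow.neg
  rw [e]
  exact ((vanishesBelow_magnus_sub_one g⁻¹).mul hD').neg.mono (by omega)

def expSum : FreeGroup X →* Multiplicative ℤ := lift fun _ => .ofAdd 1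

@[simp] theorem expSum_of (x : X) : expSum (of x) = .ofAdd 1 := lift_apply_of

theorem eq_one_of_commute {q t : FreeGroup X} (h : Commute q t) (hq : expSum q ≠ 1)
    (ht : expSum t = 1) : t = 1 := by
  obtain ⟨u, m, n, rfl, rfl⟩ := IsFreeGroup.exists_zpow_eq_of_commute h
  rw [map_zpow] at hq ht
  have hu : expSum u ≠ 1 := fun hu => hq (by rw [hu, one_zpow])
  rw [(IsMulTorsionFree.zpow_eq_one_iff_right hu).mp ht, zpow_zero]

theorem eq_of_conj_eq {q r s : FreeGroup X} (hq : expSum q ≠ 1) (hrs : expSum r = expSum s)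
    (h : r⁻¹ * q * r = s⁻¹ * q * s) : r = s := by
  refine mul_inv_eq_one.mp (eq_one_of_commute ?_ hq
    (by rw [_root_.map_mul, _root_.map_inv, hrs, mul_inv_cancel]))
  calc q * (r * s⁻¹) = r * (r⁻¹ * q * r) * s⁻¹ := by group
    _ = r * (s⁻¹ * q * s) * s⁻¹ := by rw [h]
    _ = r * s⁻¹ * q := by group

end FreeGroup

theorem freeQuandle_rightOrderable_semiLatin_general
    (X : Type*)
    (Q : Set (FreeGroup X))
    (hQ : Q = {g : FreeGroup X | ∃ (x : X) (w : FreeGroup X),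
      g = w⁻¹ * FreeGroup.of x * w}) :
    -- `Q` is closed under conjugation, i.e. a subquandle of `Conj(F(X))`
    (∀ q ∈ Q, ∀ r ∈ Q, r⁻¹ * q * r ∈ Q) ∧
    -- `Q` admits a right order
    (∃ lt : FreeGroup X → FreeGroup X → Prop,
      (∀ a ∈ Q, ¬ lt a a) ∧
      (∀ a ∈ Q, ∀ b ∈ Q, ∀ c ∈ Q, lt a b → lt b c → lt a c) ∧
      (∀ a ∈ Q, ∀ b ∈ Q, a ≠ b → lt a b ∨ lt b a) ∧
      (∀ r ∈ Q, ∀ a ∈ Q, ∀ b ∈ Q, lt a b → lt (r⁻¹ * a * r) (r⁻¹ * b * r))) ∧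
    -- `Q` is semi-latin at every point
    (∀ qhat ∈ Q, ∀ r ∈ Q, ∀ s ∈ Q, r⁻¹ * qhat * r = s⁻¹ * qhat * s → r = s) := by
  subst hQ
  refine ⟨?_, ⟨fun a b => FreeGroup.MagnusPos (a⁻¹ * b), ?_, ?_, ?_, ?_⟩, ?_⟩
  · rintro _ ⟨x, w, rfl⟩ r -
    exact ⟨x, w * r, by group⟩
  · intro a _
    simpa using FreeGroup.not_magnusPos_one
  · intro a _ b _ c _ hab hbc
    simpa [mul_assoc] using hab.mul hbc
  · intro a _ b _ hab
    simpa using FreeGroup.magnusPos_or_magnusPos_inv (inv_mul_eq_one.not.mpr hab)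
  · intro r _ a _ b _ hab
    simpa [mul_assoc] using hab.conj r
  · rintro q ⟨x, w, rfl⟩ r ⟨y, u, rfl⟩ s ⟨z, v, rfl⟩ h
    exact FreeGroup.eq_of_conj_eq (by simp) (by simp) h

/-- Let `X` be a nonempty set and `Q ⊆ F(X)` the set of all
conjugates `w⁻¹ x w` of generators `x ∈ X` in the free group `F(X)`, with the
conjugation operation `q * r := r⁻¹ q r` (so `Q` is a subquandle of
`Conj(F(X))`, realizing the free quandle on `X`). Then `Q` admits a right
order, and `Q` is semi-latin at every point. -/
theorem freeQuandle_rightOrderable_semiLatin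
    (X : Type*) [Nonempty X]
    (Q : Set (FreeGroup X))
    (hQ : Q = {g : FreeGroup X | ∃ (x : X) (w : FreeGroup X),
      g = w⁻¹ * FreeGroup.of x * w}) :
    -- `Q` is closed under conjugation, i.e. a subquandle of `Conj(F(X))`
    (∀ q ∈ Q, ∀ r ∈ Q, r⁻¹ * q * r ∈ Q) ∧
    -- `Q` admits a right order
    (∃ lt : FreeGroup X → FreeGroup X → Prop,
      (∀ a ∈ Q, ¬ lt a a) ∧
      (∀ a ∈ Q, ∀ b ∈ Q, ∀ c ∈ Q, lt a b → lt b c → lt a c) ∧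
      (∀ a ∈ Q, ∀ b ∈ Q, a ≠ b → lt a b ∨ lt b a) ∧
      (∀ r ∈ Q, ∀ a ∈ Q, ∀ b ∈ Q, lt a b → lt (r⁻¹ * a * r) (r⁻¹ * b * r))) ∧
    -- `Q` is semi-latin at every point
    (∀ qhat ∈ Q, ∀ r ∈ Q, ∀ s ∈ Q, r⁻¹ * qhat * r = s⁻¹ * qhat * s → r = s) :=
  freeQuandle_rightOrderable_semiLatin_general X Q hQ
end

section
/- Let (Q,*) be a countable weak-latin quandle with a right order <. Then there exist a strictly increasing map ι : Q → ℝ (q < q' implies ι(q) < ι(q')) and a map ψ from Q to the group of order-preserving bijections of ℝ (equivalently, orientation-preserving homeomorphisms of ℝ) such that: (1) ψ is injective; (2) ψ(q*r) = ψ(r) ∘ ψ(q) ∘ ψ(r)⁻¹ for all q,r ∈ Q (where (f ∘ g)(x) = f(g(x))), i.e., ψ is a quandle anti-homomorphism into the conjugation quandle of Homeo₊(ℝ); and (3) ψ(q)(ι(q')) = ι(q'*q) for all q,q' ∈ Q. In particular, every countable weak-latin right orderable quandle acts faithfully on the real line. -/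
/-!
Right translations `s ↦ s * q` are order automorphisms of `Q`, and self-distributivity says that
`q ↦ (· * q)` turns `q * r` into the conjugate of `(· * q)` by `(· * r)`. So it suffices to realize
the whole group `Aut(Q, <)` on `ℝ` equivariantly. The order `Q ×ₗ ℚ` is countable, dense and without
endpoints, hence isomorphic to `ℚ` by Cantor's back-and-forth theorem; `Aut(Q)` acts on it through
the first coordinate, and every order automorphism of `ℚ` extends to one of `ℝ`
(Dedekind cuts), multiplicatively. Faithfulness comes from weak-latinity: `(· * q)` and `(· * q')`
already differ at some point of `Q`.
-/

namespace OrderIso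

noncomputable def extendReal (f : ℚ ≃o ℚ) (x : ℝ) : ℝ :=
  sSup ((fun t : ℚ => (f t : ℝ)) '' {t : ℚ | (t : ℝ) ≤ x})

/- A real number is determined by the rationals below it, so every identity about `extendReal`
reduces to this one. -/
theorem ratCast_lt_extendReal_iff (f : ℚ ≃o ℚ) (x : ℝ) (s : ℚ) :
    (s : ℝ) < extendReal f x ↔ (f.symm s : ℝ) < x := by
  obtain ⟨t₀, ht₀⟩ := exists_rat_lt x
  obtain ⟨u, hu⟩ := exists_rat_gt x
  have hne : ((fun t : ℚ => (f t : ℝ)) '' {t : ℚ | (t : ℝ) ≤ x}).Nonempty :=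
    ⟨_, t₀, ht₀.le, rfl⟩
  have hbdd : BddAbove ((fun t : ℚ => (f t : ℝ)) '' {t : ℚ | (t : ℝ) ≤ x}) := by
    refine ⟨f u, ?_⟩
    rintro _ ⟨t, ht, rfl⟩
    exact Rat.cast_le.mpr (f.monotone (Rat.cast_le.mp (ht.trans hu.le)))
  constructor
  · intro hs
    obtain ⟨_, ⟨t, ht, rfl⟩, hst⟩ := exists_lt_of_lt_csSup hne hs
    have : f.symm s < t := f.symm_apply_lt.mpr (Rat.cast_lt.mp hst)
    exact lt_of_lt_of_le (by exact_mod_cast this) ht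
  · intro hs
    obtain ⟨t, hst, htx⟩ := exists_rat_btwn hs
    have : s < f t := f.symm_apply_lt.mp (by exact_mod_cast hst)
    exact (Rat.cast_lt.mpr this).trans_le (le_csSup hbdd ⟨t, htx.le, rfl⟩)

theorem extendReal_ratCast (f : ℚ ≃o ℚ) (t : ℚ) : extendReal f t = f t :=
  eq_of_forall_rat_lt_iff_lt fun s => by
    rw [ratCast_lt_extendReal_iff]
    exact_mod_cast f.symm_apply_lt

theorem extendReal_extendReal (f g : ℚ ≃o ℚ) (x : ℝ) :
    extendReal f (extendReal g x) = extendReal (g.trans f) x :=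
  eq_of_forall_rat_lt_iff_lt fun s => by
    simp only [ratCast_lt_extendReal_iff, symm_trans_apply]

theorem extendReal_refl (x : ℝ) : extendReal (refl ℚ) x = x :=
  eq_of_forall_rat_lt_iff_lt fun s => by
    simp only [ratCast_lt_extendReal_iff, symm_refl, refl_apply]

theorem monotone_extendReal (f : ℚ ≃o ℚ) : Monotone (extendReal f) := fun _ _ hxy =>
  le_of_forall_rat_lt_imp_le fun s hs =>
    ((ratCast_lt_extendReal_iff f _ s).mpr
      (((ratCast_lt_extendReal_iff f _ s).mp hs).trans_le hxy)).le

theorem extendReal_symm_extendReal (f : ℚ ≃o ℚ) (x : ℝ) :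
    extendReal f.symm (extendReal f x) = x := by
  rw [extendReal_extendReal, self_trans_symm, extendReal_refl]

noncomputable def extendRealHom : (ℚ ≃o ℚ) →* (ℝ ≃o ℝ) where
  toFun f := Equiv.toOrderIso
    ⟨extendReal f, extendReal f.symm, extendReal_symm_extendReal f,
      fun x => by simpa using extendReal_symm_extendReal f.symm x⟩
    (monotone_extendReal f) (monotone_extendReal f.symm)
  map_one' := RelIso.ext extendReal_refl
  map_mul' f g := RelIso.ext fun x => (extendReal_extendReal f g x).symm

theorem extendRealHom_apply_ratCast (f : ℚ ≃o ℚ) (t : ℚ) : extendRealHom f t = f t :=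
  extendReal_ratCast f t

variable {α β : Type*} [Preorder α] [Preorder β]

def autCongr (e : α ≃o β) : (α ≃o α) ≃* (β ≃o β) where
  toFun f := (e.symm.trans f).trans e
  invFun g := (e.trans g).trans e.symm
  left_inv f := by ext; simp
  right_inv g := by ext; simp
  map_mul' f g := by ext; simp [RelIso.mul_apply]

def prodLexCongrLeftHom (β : Type*) [Preorder β] : (α ≃o α) →* (α ×ₗ β ≃o α ×ₗ β) where
  toFun f := Prod.Lex.prodLexCongr f (refl β)
  map_one' := by ext; rfl
  map_mul' f g := by ext; rfl

end OrderIso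

open OrderIso in
theorem exists_equivariant_orderEmbedding_real (α : Type*) [LinearOrder α] [Countable α] :
    ∃ (ι : α ↪o ℝ) (Φ : (α ≃o α) →* (ℝ ≃o ℝ)), ∀ f a, Φ f (ι a) = ι (f a) := by
  rcases isEmpty_or_nonempty α with hα | hα
  · exact ⟨OrderEmbedding.ofIsEmpty, 1, fun _ a => isEmptyElim a⟩
  have : Countable (α ×ₗ ℚ) := inferInstanceAs (Countable (α × ℚ))
  have : Nonempty (α ×ₗ ℚ) := inferInstanceAs (Nonempty (α × ℚ))
  obtain ⟨e⟩ := Order.iso_of_countable_dense (α ×ₗ ℚ) ℚ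
  refine ⟨OrderEmbedding.ofStrictMono (fun a => (e (toLex (a, 0)) : ℝ)) fun a b hab => ?_,
    extendRealHom.comp ((autCongr e).toMonoidHom.comp (prodLexCongrLeftHom ℚ)), fun f a => ?_⟩
  · exact Rat.cast_lt.mpr (e.strictMono (Prod.Lex.toLex_lt_toLex.mpr (Or.inl hab)))
  · change extendRealHom _ (e (toLex (a, 0)) : ℝ) = (e (toLex (f a, 0)) : ℝ)
    rw [extendRealHom_apply_ratCast]
    simp [autCongr, prodLexCongrLeftHom]

section RightOrderedQuandle

variable {Q : Type*} [LinearOrder Q] (op : Q → Q → Q)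

noncomputable def rightOpOrderIso (hsurj : ∀ r, Function.Surjective (op · r))
    (hmono : ∀ r, StrictMono (op · r)) (r : Q) : Q ≃o Q :=
  StrictMono.orderIsoOfSurjective (op · r) (hmono r) (hsurj r)

theorem rightOpOrderIso_op (hsurj : ∀ r, Function.Surjective (op · r))
    (hmono : ∀ r, StrictMono (op · r)) (hdist : ∀ q r s, op (op q r) s = op (op q s) (op r s))
    (q r : Q) :
    rightOpOrderIso op hsurj hmono (op q r) =
      rightOpOrderIso op hsurj hmono r * rightOpOrderIso op hsurj hmono q *
        (rightOpOrderIso op hsurj hmono r)⁻¹ := by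
  ext s
  let σ := rightOpOrderIso op hsurj hmono
  change op s (op q r) = op (op ((σ r)⁻¹ s) q) r
  rw [hdist]
  exact congrArg (op · _) (RelIso.apply_inv_self (σ r) s).symm

end RightOrderedQuandle

theorem dynamical_realization_line_general
    {Q : Type*} [Countable Q] (op : Q → Q → Q)
    (hQ2 : ∀ q r : Q, ∃! s : Q, op s r = q)
    (hQ3 : ∀ q r s : Q, op (op q r) s = op (op q s) (op r s))
    (hwl : ∀ q r : Q, ∃ qhat : Q, (op qhat q = op qhat r → q = r))
    (lt : Q → Q → Prop) (hlt : IsStrictTotalOrder Q lt)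
    (hinv : ∀ q q1 q2 : Q, lt q1 q2 → lt (op q1 q) (op q2 q)) :
    ∃ (ι : Q → ℝ) (ψ : Q → (ℝ ≃o ℝ)),
      -- ι is strictly increasing
      (∀ q q' : Q, lt q q' → ι q < ι q') ∧
      -- (1) the action is faithful
      Function.Injective ψ ∧
      -- (2) ψ is a quandle anti-homomorphism into Conj(Homeo₊(ℝ)):
      --     ψ(q*r) = ψ(r) ∘ ψ(q) ∘ ψ(r)⁻¹
      (∀ q r : Q, ∀ x : ℝ, ψ (op q r) x = ψ r (ψ q ((ψ r).symm x))) ∧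
      -- (3) the action realizes the quandle operation on ι(Q)
      (∀ q q' : Q, ψ q (ι q') = ι (op q' q)) := by
  classical
  let : LinearOrder Q := linearOrderOfSTO lt
  obtain ⟨ι, Φ, hΦ⟩ := exists_equivariant_orderEmbedding_real Q
  let σ := rightOpOrderIso op (fun r s => (hQ2 s r).exists) fun r _ _ h => hinv r _ _ h
  have hσ : ∀ q r, σ (op q r) = σ r * σ q * (σ r)⁻¹ := rightOpOrderIso_op op _ _ hQ3
  refine ⟨ι, fun q => Φ (σ q), fun q q' h => ι.strictMono h, fun q q' h => ?_,
    fun q r x => ?_, fun q q' => hΦ (σ q) q'⟩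
  · obtain ⟨qhat, hqhat⟩ := hwl q q'
    have hqq' := DFunLike.congr_fun h (ι qhat)
    rw [hΦ, hΦ] at hqq'
    exact hqhat (ι.injective hqq')
  · show Φ (σ (op q r)) x = _
    rw [hσ, map_mul, map_mul, map_inv]
    rfl

/-- Dynamical realization of a right order on a countable
weak-latin quandle: there are a strictly increasing embedding `ι : Q → ℝ` and a
faithful quandle action `ψ` of `Q` by order-preserving bijections
(equivalently, orientation-preserving homeomorphisms) of `ℝ`, i.e. `ψ` is an
injective quandle anti-homomorphism into `Conj(Homeo₊(ℝ))` realizing the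
natural action `ψ(q)(ι(q')) = ι(q' * q)` on the embedded copy of `Q`. -/
theorem dynamical_realization_line
    {Q : Type*} [Countable Q] (op : Q → Q → Q)
    (hQ1 : ∀ q : Q, op q q = q)
    (hQ2 : ∀ q r : Q, ∃! s : Q, op s r = q)
    (hQ3 : ∀ q r s : Q, op (op q r) s = op (op q s) (op r s))
    (hwl : ∀ q r : Q, ∃ qhat : Q, (op qhat q = op qhat r → q = r))
    (lt : Q → Q → Prop) (hlt : IsStrictTotalOrder Q lt)
    (hinv : ∀ q q1 q2 : Q, lt q1 q2 → lt (op q1 q) (op q2 q)) :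
    ∃ (ι : Q → ℝ) (ψ : Q → (ℝ ≃o ℝ)),
      -- ι is strictly increasing
      (∀ q q' : Q, lt q q' → ι q < ι q') ∧
      -- (1) the action is faithful
      Function.Injective ψ ∧
      -- (2) ψ is a quandle anti-homomorphism into Conj(Homeo₊(ℝ)):
      --     ψ(q*r) = ψ(r) ∘ ψ(q) ∘ ψ(r)⁻¹
      (∀ q r : Q, ∀ x : ℝ, ψ (op q r) x = ψ r (ψ q ((ψ r).symm x))) ∧
      -- (3) the action realizes the quandle operation on ι(Q)
      (∀ q q' : Q, ψ q (ι q') = ι (op q' q)) :=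
  dynamical_realization_line_general op hQ2 hQ3 hwl lt hlt hinv
end

section
/- Let (Q,*) be a quandle and let RCQ(Q) be the set of all right circular orders on Q, regarded as a subset of the space of all functions Q³ → {-1,0,1} equipped with the product (Tychonoff) topology, where {-1,0,1} carries the discrete topology. Then RCQ(Q) is compact and totally disconnected; moreover, if Q is countable, then RCQ(Q) (with its subspace topology) is metrizable. -/
/-- The space `RCQ(Q)` of right circular orders on a quandle `(Q, op)`, as a
subset of the space `{-1,0,1}^{Q³}` of functions `Q³ → {-1,0,1}` (here realized
inside `ℤ^{Q³}` with the product topology, `ℤ` discrete). -/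
def RCQset {Q : Type*} (op : Q → Q → Q) : Set (Q → Q → Q → ℤ) :=
  {c | (∀ q1 q2 q3 : Q, c q1 q2 q3 = -1 ∨ c q1 q2 q3 = 0 ∨ c q1 q2 q3 = 1) ∧
       (∀ q1 q2 q3 : Q, c q1 q2 q3 = 0 ↔ (q1 = q2 ∨ q2 = q3 ∨ q1 = q3)) ∧
       (∀ q1 q2 q3 q4 : Q,
         c q2 q3 q4 - c q1 q3 q4 + c q1 q2 q4 - c q1 q2 q3 = 0) ∧
       (∀ q q1 q2 q3 : Q, c q1 q2 q3 = c (op q1 q) (op q2 q) (op q3 q))}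

/-- Evaluation at a triple is continuous on the product space. -/
lemma RCQ_eval_continuous {Q : Type*} (a b d : Q) :
    Continuous fun c : Q → Q → Q → ℤ => c a b d :=
  (continuous_apply d).comp ((continuous_apply b).comp (continuous_apply a))

/-- `RCQset op` is a closed subset of the product space. -/
lemma RCQ_isClosed {Q : Type*} (op : Q → Q → Q) : IsClosed (RCQset op) := by
  have hA : IsClosed {c : Q → Q → Q → ℤ |
      ∀ q1 q2 q3 : Q, c q1 q2 q3 = -1 ∨ c q1 q2 q3 = 0 ∨ c q1 q2 q3 = 1} := by
    have : {c : Q → Q → Q → ℤ |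
        ∀ q1 q2 q3 : Q, c q1 q2 q3 = -1 ∨ c q1 q2 q3 = 0 ∨ c q1 q2 q3 = 1} =
        ⋂ (q1 : Q) (q2 : Q) (q3 : Q),
          (fun c : Q → Q → Q → ℤ => c q1 q2 q3) ⁻¹' ({-1, 0, 1} : Set ℤ) := by
      ext c; simp [Set.mem_iInter, Set.mem_preimage]
    rw [this]
    exact isClosed_iInter fun q1 => isClosed_iInter fun q2 => isClosed_iInter fun q3 =>
      (isClosed_discrete _).preimage (RCQ_eval_continuous q1 q2 q3)
  have hB : IsClosed {c : Q → Q → Q → ℤ |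
      ∀ q1 q2 q3 : Q, c q1 q2 q3 = 0 ↔ (q1 = q2 ∨ q2 = q3 ∨ q1 = q3)} := by
    have : {c : Q → Q → Q → ℤ |
        ∀ q1 q2 q3 : Q, c q1 q2 q3 = 0 ↔ (q1 = q2 ∨ q2 = q3 ∨ q1 = q3)} =
        ⋂ (q1 : Q) (q2 : Q) (q3 : Q),
          {c : Q → Q → Q → ℤ | c q1 q2 q3 = 0 ↔ (q1 = q2 ∨ q2 = q3 ∨ q1 = q3)} := by
      ext c; simp [Set.mem_iInter]
    rw [this]
    refine isClosed_iInter fun q1 => isClosed_iInter fun q2 => isClosed_iInter fun q3 => ?_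
    by_cases h : (q1 = q2 ∨ q2 = q3 ∨ q1 = q3)
    · have : {c : Q → Q → Q → ℤ | c q1 q2 q3 = 0 ↔ (q1 = q2 ∨ q2 = q3 ∨ q1 = q3)} =
          (fun c : Q → Q → Q → ℤ => c q1 q2 q3) ⁻¹' ({0} : Set ℤ) := by
        ext c; simp [h]
      rw [this]
      exact (isClosed_discrete _).preimage (RCQ_eval_continuous q1 q2 q3)
    · have : {c : Q → Q → Q → ℤ | c q1 q2 q3 = 0 ↔ (q1 = q2 ∨ q2 = q3 ∨ q1 = q3)} =
          (fun c : Q → Q → Q → ℤ => c q1 q2 q3) ⁻¹' (({0} : Set ℤ)ᶜ) := by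
        ext c; simp [h]
      rw [this]
      exact (isClosed_discrete _).preimage (RCQ_eval_continuous q1 q2 q3)
  have hC : IsClosed {c : Q → Q → Q → ℤ |
      ∀ q1 q2 q3 q4 : Q, c q2 q3 q4 - c q1 q3 q4 + c q1 q2 q4 - c q1 q2 q3 = 0} := by
    have : {c : Q → Q → Q → ℤ |
        ∀ q1 q2 q3 q4 : Q, c q2 q3 q4 - c q1 q3 q4 + c q1 q2 q4 - c q1 q2 q3 = 0} =
        ⋂ (q1 : Q) (q2 : Q) (q3 : Q) (q4 : Q),
          {c : Q → Q → Q → ℤ | c q2 q3 q4 - c q1 q3 q4 + c q1 q2 q4 - c q1 q2 q3 = 0} := by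
      ext c; simp [Set.mem_iInter]
    rw [this]
    refine isClosed_iInter fun q1 => isClosed_iInter fun q2 =>
      isClosed_iInter fun q3 => isClosed_iInter fun q4 => ?_
    exact isClosed_eq
      ((((RCQ_eval_continuous q2 q3 q4).sub (RCQ_eval_continuous q1 q3 q4)).add
        (RCQ_eval_continuous q1 q2 q4)).sub (RCQ_eval_continuous q1 q2 q3))
      continuous_const
  have hD : IsClosed {c : Q → Q → Q → ℤ |
      ∀ q q1 q2 q3 : Q, c q1 q2 q3 = c (op q1 q) (op q2 q) (op q3 q)} := by
    have : {c : Q → Q → Q → ℤ |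
        ∀ q q1 q2 q3 : Q, c q1 q2 q3 = c (op q1 q) (op q2 q) (op q3 q)} =
        ⋂ (q : Q) (q1 : Q) (q2 : Q) (q3 : Q),
          {c : Q → Q → Q → ℤ | c q1 q2 q3 = c (op q1 q) (op q2 q) (op q3 q)} := by
      ext c; simp [Set.mem_iInter]
    rw [this]
    refine isClosed_iInter fun q => isClosed_iInter fun q1 =>
      isClosed_iInter fun q2 => isClosed_iInter fun q3 => ?_
    exact isClosed_eq (RCQ_eval_continuous q1 q2 q3)
      (RCQ_eval_continuous (op q1 q) (op q2 q) (op q3 q))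
  have : RCQset op =
      {c : Q → Q → Q → ℤ |
        ∀ q1 q2 q3 : Q, c q1 q2 q3 = -1 ∨ c q1 q2 q3 = 0 ∨ c q1 q2 q3 = 1} ∩
      ({c : Q → Q → Q → ℤ |
        ∀ q1 q2 q3 : Q, c q1 q2 q3 = 0 ↔ (q1 = q2 ∨ q2 = q3 ∨ q1 = q3)} ∩
      ({c : Q → Q → Q → ℤ |
        ∀ q1 q2 q3 q4 : Q, c q2 q3 q4 - c q1 q3 q4 + c q1 q2 q4 - c q1 q2 q3 = 0} ∩
       {c : Q → Q → Q → ℤ |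
        ∀ q q1 q2 q3 : Q, c q1 q2 q3 = c (op q1 q) (op q2 q) (op q3 q)})) := by
    ext c
    exact ⟨fun h => ⟨h.1, h.2.1, h.2.2.1, h.2.2.2⟩, fun h => ⟨h.1, h.2.1, h.2.2.1, h.2.2.2⟩⟩
  rw [this]
  exact hA.inter (hB.inter (hC.inter hD))

/-- For any quandle `(Q, op)`, the space `RCQ(Q)` of right
circular orders, with the subspace topology from the product (Tychonoff)
topology on `{-1,0,1}^{Q³}` (discrete codomain), is compact and totally
disconnected; if moreover `Q` is countable, it is metrizable. -/
theorem RCQ_compact_totallyDisconnected_metrizable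
    {Q : Type*} (op : Q → Q → Q)
    (hQ1 : ∀ q : Q, op q q = q)
    (hQ2 : ∀ q r : Q, ∃! s : Q, op s r = q)
    (hQ3 : ∀ q r s : Q, op (op q r) s = op (op q s) (op r s)) :
    IsCompact (RCQset op) ∧
    IsTotallyDisconnected (RCQset op) ∧
    (Countable Q → TopologicalSpace.MetrizableSpace (RCQset op)) := by
  refine ⟨?_, isTotallyDisconnected_of_totallyDisconnectedSpace _, fun h => ?_⟩
  · -- compactness: closed subset of the compact cube {-1,0,1}^{Q³}
    have hfin : IsCompact ({-1, 0, 1} : Set ℤ) :=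
      (Set.toFinite ({-1, 0, 1} : Set ℤ)).isCompact
    have hK : IsCompact (Set.pi Set.univ fun _ : Q =>
        Set.pi Set.univ fun _ : Q => Set.pi Set.univ fun _ : Q => ({-1, 0, 1} : Set ℤ)) :=
      isCompact_univ_pi fun _ => isCompact_univ_pi fun _ => isCompact_univ_pi fun _ => hfin
    refine hK.of_isClosed_subset (RCQ_isClosed op) ?_
    intro c hc
    intro q1 _ q2 _ q3 _
    rcases hc.1 q1 q2 q3 with h | h | h <;> simp [h]
  · exact inferInstance
end

section
/- Let (Q,*) be a quandle and let RQ(Q) be the set of all right orders on Q, where a right order is encoded as its characteristic function R : Q × Q → {0,1} (R(a,b) = 1 iff a < b), so that RQ(Q) is the set of all R ∈ {0,1}^{Q×Q} satisfying irreflexivity (R(a,a) = 0), transitivity (R(a,b) = 1 and R(b,c) = 1 imply R(a,c) = 1), totality (a ≠ b implies R(a,b) = 1 or R(b,a) = 1), asymmetry (R(a,b) = 1 implies R(b,a) = 0), and right-invariance (R(a,b) = 1 implies R(a*q, b*q) = 1). Then RQ(Q), as a subset of {0,1}^{Q×Q} with the product topology ({0,1} discrete), is compact. -/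
/-- Any condition on three coordinates cuts out a closed subset of `Q × Q → Bool`. -/
lemma key3 {Q : Type*} (p q r : Q × Q) (P : Bool → Bool → Bool → Prop) :
    IsClosed {R : Q × Q → Bool | P (R p) (R q) (R r)} := by
  have h : {R : Q × Q → Bool | P (R p) (R q) (R r)} =
      (fun R : Q × Q → Bool => (R p, R q, R r)) ⁻¹' {t | P t.1 t.2.1 t.2.2} := rfl
  rw [h]
  exact (isClosed_discrete _).preimage
    ((continuous_apply p).prodMk ((continuous_apply q).prodMk (continuous_apply r)))

/-- For a quandle `(Q, op)`, the space `RQ(Q)` of right orders,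
encoded as characteristic functions `R : Q × Q → {0,1}` (here `Bool`) of strict
right-invariant linear orders, is a compact subset of `{0,1}^{Q×Q}` with the
product (Tychonoff) topology. -/
theorem RQ_compact
    {Q : Type*} (op : Q → Q → Q)
    (hQ1 : ∀ q : Q, op q q = q)
    (hQ2 : ∀ q r : Q, ∃! s : Q, op s r = q)
    (hQ3 : ∀ q r s : Q, op (op q r) s = op (op q s) (op r s)) :
    IsCompact {R : Q × Q → Bool |
      (∀ a : Q, R (a, a) = false) ∧
      (∀ a b c : Q, R (a, b) = true → R (b, c) = true → R (a, c) = true) ∧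
      (∀ a b : Q, a ≠ b → R (a, b) = true ∨ R (b, a) = true) ∧
      (∀ a b : Q, R (a, b) = true → R (b, a) = false) ∧
      (∀ q a b : Q, R (a, b) = true → R (op a q, op b q) = true)} := by
  have hcl : IsClosed {R : Q × Q → Bool |
      (∀ a : Q, R (a, a) = false) ∧
      (∀ a b c : Q, R (a, b) = true → R (b, c) = true → R (a, c) = true) ∧
      (∀ a b : Q, a ≠ b → R (a, b) = true ∨ R (b, a) = true) ∧
      (∀ a b : Q, R (a, b) = true → R (b, a) = false) ∧
      (∀ q a b : Q, R (a, b) = true → R (op a q, op b q) = true)} := by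
    have heq : {R : Q × Q → Bool |
        (∀ a : Q, R (a, a) = false) ∧
        (∀ a b c : Q, R (a, b) = true → R (b, c) = true → R (a, c) = true) ∧
        (∀ a b : Q, a ≠ b → R (a, b) = true ∨ R (b, a) = true) ∧
        (∀ a b : Q, R (a, b) = true → R (b, a) = false) ∧
        (∀ q a b : Q, R (a, b) = true → R (op a q, op b q) = true)} =
      (⋂ a, {R : Q × Q → Bool | R (a, a) = false}) ∩
      (⋂ a, ⋂ b, ⋂ c, {R : Q × Q → Bool |
        R (a, b) = true → R (b, c) = true → R (a, c) = true}) ∩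
      (⋂ a, ⋂ b, {R : Q × Q → Bool | a ≠ b → R (a, b) = true ∨ R (b, a) = true}) ∩
      (⋂ a, ⋂ b, {R : Q × Q → Bool | R (a, b) = true → R (b, a) = false}) ∩
      (⋂ q, ⋂ a, ⋂ b, {R : Q × Q → Bool |
        R (a, b) = true → R (op a q, op b q) = true}) := by
      ext R
      simp only [Set.mem_setOf_eq, Set.mem_inter_iff, Set.mem_iInter]
      tauto
    rw [heq]
    refine IsClosed.inter (IsClosed.inter (IsClosed.inter (IsClosed.inter ?_ ?_) ?_) ?_) ?_
    · exact isClosed_iInter fun a =>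
        key3 (a, a) (a, a) (a, a) (fun x _ _ => x = false)
    · exact isClosed_iInter fun a => isClosed_iInter fun b => isClosed_iInter fun c =>
        key3 (a, b) (b, c) (a, c) (fun x y z => x = true → y = true → z = true)
    · exact isClosed_iInter fun a => isClosed_iInter fun b =>
        key3 (a, b) (b, a) (a, b) (fun x y _ => a ≠ b → x = true ∨ y = true)
    · exact isClosed_iInter fun a => isClosed_iInter fun b =>
        key3 (a, b) (b, a) (a, b) (fun x y _ => x = true → y = false)
    · exact isClosed_iInter fun q => isClosed_iInter fun a => isClosed_iInter fun b =>
        key3 (a, b) (op a q, op b q) (a, b) (fun x y _ => x = true → y = true)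
  exact hcl.isCompact
end
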